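/- Every continuous group homomorphism χ : S¹_ℚ → S¹ is of the form χ(x) = π_n(x)^m for some positive integer n and some integer m; consequently the assignment m/n ↦ (π_n)^m defines a group isomorphism from the discrete group (ℚ, +) onto the group of continuous characters of S¹_ℚ, i.e., the Pontryagin dual of S¹_ℚ is isomorphic to ℚ. -/

import Mathlib

open Complex Real Filter MeasureTheory

noncomputable section

/-- The profinite completion of `ℤ`: the inverse limit of the groups `ZMod n`
over the divisibility order. -/
def Zhat : Type :=
  {a : (n : ℕ+) → ZMod n //
    ∀ (n k : ℕ+), ZMod.castHom
        (show ((n : ℕ+) : ℕ) ∣ ((n * k : ℕ+) : ℕ) by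
          rw [PNat.mul_coe]; exact dvd_mul_right _ _)
        (ZMod n) (a (n * k)) = a n}

instance (n : ℕ) : TopologicalSpace (ZMod n) := ⊥

instance : TopologicalSpace Zhat := by unfold Zhat; infer_instance

instance : MeasurableSpace Zhat := borel _

instance : Zero Zhat := ⟨⟨fun _ => 0, fun _ _ => map_zero _⟩⟩

instance : Add Zhat :=
  ⟨fun a b => ⟨fun n => a.1 n + b.1 n, fun n k => by rw [map_add, a.2 n k, b.2 n k]⟩⟩

/-- The canonical inclusion `ℤ → ẑ`. -/
def iotaZ (k : ℤ) : Zhat := ⟨fun n => (k : ZMod n), fun n m => by rw [map_intCast]⟩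

/-- Multiplication by a natural number on `ẑ`. -/
def nsmulZ (c : ℕ) (a : Zhat) : Zhat :=
  ⟨fun n => (c : ZMod n) * a.1 n, fun n k => by rw [map_mul, map_natCast, a.2 n k]⟩

lemma exp_real_mul_I_norm (θ : ℝ) : ‖Complex.exp ((θ : ℂ) * Complex.I)‖ = 1 := by
  rw [Complex.norm_exp_ofReal_mul_I]

lemma exp_div_pow (θ : ℝ) (n k : ℕ+) :
    Complex.exp (((θ / (((n * k : ℕ+) : ℕ)) : ℝ) : ℂ) * Complex.I) ^ ((k : ℕ+) : ℕ)
      = Complex.exp (((θ / ((n : ℕ+) : ℕ) : ℝ) : ℂ) * Complex.I) := by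
  rw [← Complex.exp_nat_mul]
  congr 1
  have hn : (((n : ℕ+) : ℕ) : ℂ) ≠ 0 := by exact_mod_cast n.ne_zero
  have hk : (((k : ℕ+) : ℕ) : ℂ) ≠ 0 := by exact_mod_cast k.ne_zero
  rw [PNat.mul_coe]
  push_cast
  field_simp

lemma exp_div_powC (w : ℂ) (n k : ℕ+) :
    Complex.exp (w / (((n * k : ℕ+) : ℕ) : ℂ)) ^ ((k : ℕ+) : ℕ)
      = Complex.exp (w / (((n : ℕ+) : ℕ) : ℂ)) := by
  rw [← Complex.exp_nat_mul]
  congr 1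
  have hn : (((n : ℕ+) : ℕ) : ℂ) ≠ 0 := by exact_mod_cast n.ne_zero
  have hk : (((k : ℕ+) : ℕ) : ℂ) ≠ 0 := by exact_mod_cast k.ne_zero
  rw [PNat.mul_coe]
  push_cast
  field_simp

lemma exp_natCast_congr (n : ℕ+) (A B : ℕ)
    (h : (A : ZMod ((n : ℕ+) : ℕ)) = (B : ZMod ((n : ℕ+) : ℕ))) :
    Complex.exp (((2 * π * A / ((n : ℕ+) : ℕ) : ℝ) : ℂ) * Complex.I)
      = Complex.exp (((2 * π * B / ((n : ℕ+) : ℕ) : ℝ) : ℂ) * Complex.I) := by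
  rw [ZMod.natCast_eq_natCast_iff] at h
  obtain ⟨j, hj⟩ := Nat.modEq_iff_dvd.mp h
  have hn : ((((n : ℕ+) : ℕ) : ℝ)) ≠ 0 := by exact_mod_cast n.ne_zero
  have hB : (B : ℝ) = (A : ℝ) + (((n : ℕ+) : ℕ) : ℝ) * (j : ℝ) := by
    have : (B : ℤ) = (A : ℤ) + (((n : ℕ+) : ℕ) : ℤ) * j := by linarith [hj]
    exact_mod_cast congrArg (fun t : ℤ => (t : ℝ)) this
  have key : ((2 * π * B / ((n : ℕ+) : ℕ) : ℝ) : ℂ) * Complex.I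
      = ((2 * π * A / ((n : ℕ+) : ℕ) : ℝ) : ℂ) * Complex.I + (j : ℂ) * (2 * (π : ℂ) * Complex.I) := by
    have hnC : ((((n : ℕ+) : ℕ) : ℂ)) ≠ 0 := by exact_mod_cast n.ne_zero
    push_cast [hB]
    field_simp
  rw [key, Complex.exp_add, Complex.exp_int_mul_two_pi_mul_I, mul_one]

/-- The component at level `n` of the canonical map `ẑ → S¹_ℚ`,
`l ↦ e^{2πil/n}`. -/
def phiComp (a : Zhat) (n : ℕ+) : ℂ :=
  Complex.exp (((2 * π * ((a.1 n).val : ℕ) / ((n : ℕ+) : ℕ) : ℝ) : ℂ) * Complex.I)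

lemma phiComp_pow (a : Zhat) (n k : ℕ+) : phiComp a (n * k) ^ ((k : ℕ+) : ℕ) = phiComp a n := by
  unfold phiComp
  rw [exp_div_pow]
  haveI : NeZero (((n * k : ℕ+) : ℕ)) := ⟨(n * k).ne_zero⟩
  haveI : NeZero (((n : ℕ+) : ℕ)) := ⟨n.ne_zero⟩
  apply exp_natCast_congr
  have h := a.2 n k
  rw [ZMod.castHom_apply] at h
  rw [ZMod.natCast_val, ZMod.natCast_val, ZMod.cast_id, h]

/-- The adelic solenoid `S¹_ℚ`: the inverse limit of the circles
`S¹ = {z ∈ ℂ : ‖z‖ = 1}` under the covering maps `z ↦ z^{m/n}` for `n ∣ m`. -/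
def SolQ : Type :=
  {z : ℕ+ → ℂ // (∀ n, ‖z n‖ = 1) ∧ ∀ (n k : ℕ+), z (n * k) ^ ((k : ℕ+) : ℕ) = z n}

instance : TopologicalSpace SolQ := by unfold SolQ; infer_instance
instance : MeasurableSpace SolQ := borel _

instance : Mul SolQ :=
  ⟨fun x y => ⟨fun n => x.1 n * y.1 n,
    ⟨fun n => by rw [norm_mul, x.2.1 n, y.2.1 n, one_mul],
     fun n k => by rw [mul_pow, x.2.2 n k, y.2.2 n k]⟩⟩⟩

instance : One SolQ := ⟨⟨fun _ => 1, ⟨fun _ => norm_one, fun _ _ => one_pow _⟩⟩⟩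

/-- The canonical homomorphism `φ : ẑ → S¹_ℚ`, induced componentwise by
`l ↦ e^{2πil/n}`. -/
def phiS (a : Zhat) : SolQ :=
  ⟨fun n => phiComp a n, ⟨fun n => exp_real_mul_I_norm _, phiComp_pow a⟩⟩

/-- The baseleaf `ν : ℝ → S¹_ℚ`, `ν(t) = (e^{it/n})ₙ`. -/
def nuS (t : ℝ) : SolQ :=
  ⟨fun n => Complex.exp (((t / ((n : ℕ+) : ℕ) : ℝ) : ℂ) * Complex.I),
   ⟨fun n => exp_real_mul_I_norm _, fun n k => exp_div_pow t n k⟩⟩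

/-- `exp : ẑ × ℝ → S¹_ℚ`, `exp(a, θ) = φ(a)·ν(θ)`. -/
def expS (p : Zhat × ℝ) : SolQ := phiS p.1 * nuS p.2

/-- The algebraic solenoid `ℂ*_ℚ`: the inverse limit of copies of `ℂ* = ℂ \ {0}`
under the covering maps `z ↦ z^{m/n}` for `n ∣ m`. -/
def CSolQ : Type :=
  {z : ℕ+ → ℂ // (∀ n, z n ≠ 0) ∧ ∀ (n k : ℕ+), z (n * k) ^ ((k : ℕ+) : ℕ) = z n}

instance : TopologicalSpace CSolQ := by unfold CSolQ; infer_instance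
instance : MeasurableSpace CSolQ := borel _

instance : Mul CSolQ :=
  ⟨fun x y => ⟨fun n => x.1 n * y.1 n,
    ⟨fun n => mul_ne_zero (x.2.1 n) (y.2.1 n),
     fun n k => by rw [mul_pow, x.2.2 n k, y.2.2 n k]⟩⟩⟩

instance : One CSolQ := ⟨⟨fun _ => 1, ⟨fun _ => one_ne_zero, fun _ _ => one_pow _⟩⟩⟩

/-- The canonical homomorphism `φ : ẑ → ℂ*_ℚ`. -/
def phiC (a : Zhat) : CSolQ :=
  ⟨fun n => phiComp a n, ⟨fun n => Complex.exp_ne_zero _, phiComp_pow a⟩⟩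

/-- The baseleaf `ν : ℂ → ℂ*_ℚ`, `ν(z) = (e^{iz/n})ₙ`. -/
def nuC (z : ℂ) : CSolQ :=
  ⟨fun n => Complex.exp (Complex.I * z / (((n : ℕ+) : ℕ) : ℂ)),
   ⟨fun n => Complex.exp_ne_zero _, fun n k => exp_div_powC (Complex.I * z) n k⟩⟩

/-- `exp : ẑ × ℂ → ℂ*_ℚ`, `exp(a, z) = φ(a)·ν(z)`. -/
def expC (a : Zhat) (z : ℂ) : CSolQ := phiC a * nuC z

/-- The `n`-th power map on the Riemann sphere `Ĉ = ℂ ∪ {∞}`, with `∞ ↦ ∞`. -/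
def spherePow (k : ℕ) (x : OnePoint ℂ) : OnePoint ℂ :=
  Option.map (fun z : ℂ => z ^ k) x

/-- The adelic Riemann sphere `Ĉ_ℚ`: the inverse limit of Riemann spheres under
the branched covering maps `z ↦ z^{m/n}` for `n ∣ m`. -/
def SphereQ : Type :=
  {z : ℕ+ → OnePoint ℂ // ∀ (n k : ℕ+), spherePow ((k : ℕ+) : ℕ) (z (n * k)) = z n}

instance : TopologicalSpace SphereQ := by unfold SphereQ; infer_instance

/-- The leaf maps `exp(a, ·) : ℂ → ℂ*_ℚ ⊂ Ĉ_ℚ` of the adelic Riemann sphere. -/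
def expSph (a : Zhat) (z : ℂ) : SphereQ :=
  ⟨fun n => OnePoint.some (phiComp a n * Complex.exp (Complex.I * z / (((n : ℕ+) : ℕ) : ℂ))),
   fun n k => by
     show OnePoint.some ((phiComp a (n * k) * _) ^ ((k : ℕ+) : ℕ)) = _
     rw [mul_pow, phiComp_pow, exp_div_powC]⟩

/-- The renormalization operator `I_n` on functions on `ℂ*_ℚ`:
the average of `μ` over the fiber `π_n⁻¹(π_n(x))`, namely
`I_n(μ)(x) = ∫_{ẑ} μ(φ(n·a)·x) dη(a)`. -/
def Iren (η : Measure Zhat) (n : ℕ+) (f : CSolQ → ℂ) (x : CSolQ) : ℂ :=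
  ∫ a : Zhat, f (phiC (nsmulZ ((n : ℕ+) : ℕ) a) * x) ∂η

/-- The renormalization operator `I_n` on functions on `S¹_ℚ`. -/
def IrenS (η : Measure Zhat) (n : ℕ+) (f : SolQ → ℂ) (x : SolQ) : ℂ :=
  ∫ a : Zhat, f (phiS (nsmulZ ((n : ℕ+) : ℕ) a) * x) ∂η

/-- The character `χ_q = (π_n)^m : S¹_ℚ → S¹` associated to a rational `q = m/n`. -/
def chiQ (q : ℚ) (x : SolQ) : ℂ := (x.1 ⟨q.den, q.den_pos⟩) ^ q.num

/-- A function `f : ℝ → ℂ` is limit periodic if for every `ε > 0` there is a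
positive integer `N` such that `|f(x + 2πn) − f(x)| < ε` for all `x ∈ ℝ` and
all integers `n ∈ Nℤ`. -/
def LimitPeriodic (f : ℝ → ℂ) : Prop :=
  ∀ ε : ℝ, 0 < ε → ∃ N : ℕ+, ∀ x : ℝ, ∀ n : ℤ, ((N : ℕ+) : ℤ) ∣ n →
    ‖f (x + 2 * π * n) - f x‖ < ε

/-- A function `f : ℂ → ℂ` is limit periodic with respect to `x` if for every
`ε > 0` and compact `K ⊆ ℝ` there is a positive integer `N` with
`|f(z + 2πn) − f(z)| < ε` for all `z` with `Im z ∈ K` and all `n ∈ Nℤ`. -/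
def LimitPeriodicX (f : ℂ → ℂ) : Prop :=
  ∀ ε : ℝ, 0 < ε → ∀ K : Set ℝ, IsCompact K → ∃ N : ℕ+,
    ∀ z : ℂ, z.im ∈ K → ∀ n : ℤ, ((N : ℕ+) : ℤ) ∣ n →
      ‖f (z + 2 * π * n) - f z‖ < ε


/-!
A continuous character `χ` of `S¹_ℚ` is trivial on the kernel of some projection `π_N`: a
neighbourhood of `1` contains such a kernel, and the circle has no small subgroups. Along the
baseleaf `ν : ℝ → S¹_ℚ` it is `t ↦ e^{ict}`, by lifting through the covering `ℝ → S¹`. Since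
`ν(2πN) ∈ ker π_N`, `cN` is an integer `m`, and as every point agrees with a point of the
baseleaf in the `N`-th coordinate, `χ = (π_N)^m`. Because `(π_n)^m` depends only on `m/n`,
`q ↦ χ_q` is additive, and evaluating on the baseleaf shows that it is injective.
-/

theorem AddChar.exists_eq_circleExp_mul (ψ : AddChar ℝ Circle) (hψ : Continuous ψ) :
    ∃ c : ℝ, ∀ t, ψ t = Circle.exp (c * t) := by
  obtain ⟨F, ⟨-, hFψ⟩, hFuniq⟩ := Circle.isCoveringMap_exp.existsUnique_continuousMap_lifts
    ⟨ψ, hψ⟩ 0 0 (by simp)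
  have hFψ' (t : ℝ) : Circle.exp (F t) = ψ t := congrFun hFψ t
  -- `t ↦ F (s + t) - F s` is another lift of `ψ` vanishing at `0`
  have hFadd (s t : ℝ) : F (s + t) = F s + F t := by
    have hlift := hFuniq ⟨fun t => F (s + t) - F s, by fun_prop⟩
      ⟨by simp, funext fun t => by simp [hFψ', AddChar.map_add_eq_mul]⟩
    have := congrArg (fun G : C(ℝ, ℝ) => G t) hlift
    simp only [ContinuousMap.coe_mk] at this
    linarith
  refine ⟨F 1, fun t => ?_⟩
  have hlin := map_real_smul (AddMonoidHom.mk' F hFadd) F.continuous t 1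
  simp only [AddMonoidHom.mk'_apply, smul_eq_mul, mul_one] at hlin
  rw [← hFψ', hlin, mul_comm]

theorem Complex.half_lt_re_of_norm_eq_one {z : ℂ} (hz : ‖z‖ = 1) (h : ‖z - 1‖ < 1) :
    1 / 2 < z.re := by
  have hz2 := Complex.sq_norm z
  have hz1 := Complex.sq_norm (z - 1)
  simp only [Complex.normSq_apply, Complex.sub_re, Complex.sub_im, Complex.one_re,
    Complex.one_im, hz] at hz2 hz1
  nlinarith [norm_nonneg (z - 1)]

theorem Complex.eq_one_of_forall_norm_pow_sub_one_lt_one {w : ℂ} (hw : ‖w‖ = 1)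
    (h : ∀ k : ℕ, ‖w ^ k - 1‖ < 1) : w = 1 := by
  by_contra hw1
  have hpos : 0 < ‖w - 1‖ := norm_pos_iff.2 (sub_ne_zero.2 hw1)
  obtain ⟨n, hn⟩ := exists_nat_gt (2 / ‖w - 1‖)
  -- the powers of `w` stay in the half-plane `re > 1/2`, so their partial sums grow linearly,
  -- while the geometric sum formula keeps them bounded
  have hlower : (n : ℝ) / 2 ≤ ‖∑ k ∈ Finset.range n, w ^ k‖ :=
    calc (n : ℝ) / 2 = ∑ _k ∈ Finset.range n, (1 / 2 : ℝ) := by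
          rw [Finset.sum_const, Finset.card_range, nsmul_eq_mul]; ring
      _ ≤ ∑ k ∈ Finset.range n, (w ^ k).re := Finset.sum_le_sum fun k _ =>
          (Complex.half_lt_re_of_norm_eq_one (by simp [hw]) (h k)).le
      _ = (∑ k ∈ Finset.range n, w ^ k).re := (Complex.re_sum _ _).symm
      _ ≤ _ := Complex.re_le_norm _
  have hupper : ‖∑ k ∈ Finset.range n, w ^ k‖ < 1 / ‖w - 1‖ := by
    rw [geom_sum_eq hw1, norm_div]
    exact div_lt_div_of_pos_right (h n) hpos
  rw [div_lt_iff₀ hpos] at hn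
  rw [lt_div_iff₀ hpos] at hupper
  nlinarith

namespace SolQ

lemma val_mul (x y : SolQ) (n : ℕ+) : (x * y).1 n = x.1 n * y.1 n := rfl

lemma val_one (n : ℕ+) : (1 : SolQ).1 n = 1 := rfl

lemma norm_val (x : SolQ) (n : ℕ+) : ‖x.1 n‖ = 1 := x.2.1 n

lemma val_ne_zero (x : SolQ) (n : ℕ+) : x.1 n ≠ 0 :=
  norm_ne_zero_iff.1 (by rw [norm_val]; exact one_ne_zero)

lemma exp_arg_val (x : SolQ) (n : ℕ+) : Complex.exp (arg (x.1 n) * I) = x.1 n := by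
  simpa [norm_val] using Complex.norm_mul_exp_arg_mul_I (x.1 n)

lemma val_mul_pow (x : SolQ) (n k : ℕ+) : x.1 (n * k) ^ (k : ℕ) = x.1 n := x.2.2 n k

lemma val_eq_one_of_dvd (x : SolQ) {d n : ℕ+} (hdn : d ∣ n) (hx : x.1 n = 1) : x.1 d = 1 := by
  obtain ⟨k, rfl⟩ := hdn
  rw [← val_mul_pow, hx, one_pow]

lemma val_zpow_eq_of_mul_eq (x : SolQ) {d n : ℕ+} {a b : ℤ} (h : (d : ℤ) * a = n * b) :
    x.1 d ^ b = x.1 n ^ a := by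
  rw [← val_mul_pow x d n, ← val_mul_pow x n d, mul_comm n d, ← zpow_natCast, ← zpow_natCast,
    ← zpow_mul, ← zpow_mul, ← h]

def pow (x : SolQ) (k : ℕ) : SolQ :=
  ⟨fun n => x.1 n ^ k, fun n => by rw [norm_pow, norm_val, one_pow],
    fun n j => by beta_reduce; rw [pow_right_comm, val_mul_pow]⟩

lemma pow_zero (x : SolQ) : x.pow 0 = 1 := Subtype.ext (funext fun _ => _root_.pow_zero _)

lemma pow_succ (x : SolQ) (k : ℕ) : x.pow (k + 1) = x.pow k * x :=
  Subtype.ext (funext fun _ => _root_.pow_succ _ _)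

lemma val_pow (x : SolQ) (k : ℕ) (n : ℕ+) : (x.pow k).1 n = x.1 n ^ k := rfl

lemma exists_forall_val_eq_one_mem {U : Set SolQ} (hU : IsOpen U) (h1 : (1 : SolQ) ∈ U) :
    ∃ N : ℕ+, ∀ x : SolQ, x.1 N = 1 → x ∈ U := by
  obtain ⟨W, hW, rfl⟩ := isOpen_induced_iff.mp hU
  obtain ⟨I, u, hIu, hsub⟩ := isOpen_pi_iff.mp hW _ h1
  refine ⟨∏ i ∈ I, i, fun x hx => hsub fun i hi => ?_⟩
  rw [x.val_eq_one_of_dvd (Finset.dvd_prod_of_mem _ hi) hx]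
  exact (hIu i hi).2

lemma nuS_val (t : ℝ) (n : ℕ+) : (nuS t).1 n = Complex.exp ((t / n : ℝ) * I) := rfl

lemma nuS_zero : nuS 0 = 1 := Subtype.ext (funext fun n => by simp [nuS_val, val_one])

lemma nuS_add (s t : ℝ) : nuS (s + t) = nuS s * nuS t :=
  Subtype.ext (funext fun n => by
    rw [val_mul, nuS_val, nuS_val, nuS_val, ← Complex.exp_add]
    push_cast
    ring_nf)

lemma continuous_nuS : Continuous nuS :=
  Continuous.subtype_mk (continuous_pi fun _ => by fun_prop) _

variable {χ : SolQ → ℂ}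

lemma one_mul_one : (1 : SolQ) * 1 = 1 := Subtype.ext (funext fun _ => one_mul _)

lemma map_one_of_map_mul (hmul : ∀ x y : SolQ, χ (x * y) = χ x * χ y) (h1 : χ 1 ≠ 0) :
    χ 1 = 1 := by
  have := hmul 1 1
  rw [one_mul_one] at this
  exact (mul_eq_left₀ h1).1 this.symm

lemma map_pow_of_map_mul (hmul : ∀ x y : SolQ, χ (x * y) = χ x * χ y) (h1 : χ 1 = 1)
    (x : SolQ) (k : ℕ) : χ (x.pow k) = χ x ^ k := by
  induction k with
  | zero => rw [pow_zero, h1, _root_.pow_zero]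
  | succ k ih => rw [pow_succ, hmul, ih, _root_.pow_succ]

lemma exists_map_eq_one_of_val_eq_one (hcont : Continuous χ)
    (hmul : ∀ x y : SolQ, χ (x * y) = χ x * χ y) (hnorm : ∀ x : SolQ, ‖χ x‖ = 1) :
    ∃ N : ℕ+, ∀ x : SolQ, x.1 N = 1 → χ x = 1 := by
  have h1 : χ 1 = 1 := map_one_of_map_mul hmul (norm_ne_zero_iff.1 (by simp [hnorm]))
  obtain ⟨N, hN⟩ := exists_forall_val_eq_one_mem (Metric.isOpen_ball.preimage hcont)
    (show χ 1 ∈ Metric.ball 1 1 by simp [h1])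
  -- the kernel of `π_N` is a subgroup, so its image is a subgroup of the circle inside the
  -- unit ball around `1`
  refine ⟨N, fun x hx => Complex.eq_one_of_forall_norm_pow_sub_one_lt_one (hnorm x) fun k => ?_⟩
  rw [← map_pow_of_map_mul hmul h1, ← dist_eq_norm]
  exact hN _ (by rw [val_pow, hx, one_pow])

lemma exists_map_nuS_eq_exp (hcont : Continuous χ)
    (hmul : ∀ x y : SolQ, χ (x * y) = χ x * χ y) (hnorm : ∀ x : SolQ, ‖χ x‖ = 1) :
    ∃ c : ℝ, ∀ t : ℝ, χ (nuS t) = Complex.exp ((c * t : ℝ) * I) := by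
  have h1 : χ 1 = 1 := map_one_of_map_mul hmul (norm_ne_zero_iff.1 (by simp [hnorm]))
  let ψ : AddChar ℝ Circle :=
    { toFun := fun t => ⟨χ (nuS t), mem_sphere_zero_iff_norm.2 (hnorm _)⟩
      map_zero_eq_one' := Circle.ext (by
        show χ (nuS 0) = 1
        rw [nuS_zero, h1])
      map_add_eq_mul' := fun s t => Circle.ext (by
        show χ (nuS (s + t)) = χ (nuS s) * χ (nuS t)
        rw [nuS_add, hmul]) }
  obtain ⟨c, hc⟩ := ψ.exists_eq_circleExp_mul
    (Continuous.subtype_mk (hcont.comp continuous_nuS) _)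
  exact ⟨c, fun t => (congrArg Subtype.val (hc t)).trans (Circle.coe_exp _)⟩

theorem exists_eq_val_zpow (hcont : Continuous χ)
    (hmul : ∀ x y : SolQ, χ (x * y) = χ x * χ y) (hnorm : ∀ x : SolQ, ‖χ x‖ = 1) :
    ∃ (n : ℕ+) (m : ℤ), ∀ x : SolQ, χ x = x.1 n ^ m := by
  obtain ⟨N, hN⟩ := exists_map_eq_one_of_val_eq_one hcont hmul hnorm
  obtain ⟨c, hc⟩ := exists_map_nuS_eq_exp hcont hmul hnorm
  have hN0 : (N : ℝ) ≠ 0 := by positivity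
  obtain ⟨m, hm⟩ : ∃ m : ℤ, c * N = m := by
    have := hc (2 * π * N)
    rw [hN _ (by simp [nuS_val, hN0]), eq_comm, Complex.exp_eq_one_iff] at this
    obtain ⟨m, hm⟩ := this
    have h2 : ((c * N * (2 * π) : ℝ) : ℂ) = ((m * (2 * π) : ℝ) : ℂ) :=
      mul_right_cancel₀ I_ne_zero (by push_cast at hm ⊢; linear_combination hm)
    exact ⟨m, mul_right_cancel₀ Real.two_pi_pos.ne' (Complex.ofReal_injective h2)⟩
  refine ⟨N, m, fun x => ?_⟩
  set t : ℝ := N * arg (x.1 N)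
  have hx : x * nuS (-t) * nuS t = x := Subtype.ext (funext fun n => by
    rw [val_mul, val_mul, nuS_val, nuS_val, mul_assoc, ← Complex.exp_add]
    push_cast
    ring_nf
    rw [Complex.exp_zero, mul_one])
  have hker : (x * nuS (-t)).1 N = 1 := by
    rw [val_mul, nuS_val]
    conv_lhs => rw [← exp_arg_val x N]
    rw [← Complex.exp_add, neg_div, mul_div_cancel_left₀ _ hN0]
    push_cast
    ring_nf
    exact Complex.exp_zero
  calc χ x = χ (x * nuS (-t)) * χ (nuS t) := by rw [← hmul, hx]
    _ = Complex.exp ((c * t : ℝ) * I) := by rw [hN _ hker, one_mul, hc]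
    _ = x.1 N ^ m := by
      rw [← exp_arg_val x N, ← Complex.exp_int_mul]
      have hmC : (m : ℂ) = c * N := by exact_mod_cast hm.symm
      congr 1
      push_cast [t, hmC]
      ring

end SolQ

open SolQ

lemma chiQ_apply (q : ℚ) (x : SolQ) : chiQ q x = x.1 q.pnatDen ^ q.num := rfl

lemma chiQ_eq_val_zpow {q : ℚ} {n : ℕ+} {m : ℤ} (h : q * n = m) (x : SolQ) :
    chiQ q x = x.1 n ^ m := by
  rw [chiQ_apply]
  refine x.val_zpow_eq_of_mul_eq ?_
  have : ((q.pnatDen : ℤ) : ℚ) * m = (n : ℚ) * q.num := by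
    rw [← h, ← Rat.mul_den_eq_num q]
    push_cast [Rat.coe_pnatDen]
    ring
  exact_mod_cast this

lemma continuous_chiQ (q : ℚ) : Continuous (chiQ q) :=
  ((continuous_apply _).comp continuous_subtype_val).zpow₀ _ fun x => Or.inl (val_ne_zero x _)

lemma norm_chiQ (q : ℚ) (x : SolQ) : ‖chiQ q x‖ = 1 := by
  rw [chiQ_apply, norm_zpow, norm_val, one_zpow]

lemma chiQ_mul (q : ℚ) (x y : SolQ) : chiQ q (x * y) = chiQ q x * chiQ q y := by
  rw [chiQ_apply, chiQ_apply, chiQ_apply, val_mul, mul_zpow]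

lemma chiQ_add (q q' : ℚ) (x : SolQ) : chiQ (q + q') x = chiQ q x * chiQ q' x := by
  set n : ℕ+ := ⟨q.den * q'.den, by positivity⟩
  have hq : q * n = (q.num * q'.den : ℤ) := by
    rw [PNat.mk_coe]
    push_cast
    rw [← Rat.mul_den_eq_num q]
    ring
  have hq' : q' * n = (q'.num * q.den : ℤ) := by
    rw [PNat.mk_coe]
    push_cast
    rw [← Rat.mul_den_eq_num q']
    ring
  rw [chiQ_eq_val_zpow hq, chiQ_eq_val_zpow hq', ← zpow_add₀ (val_ne_zero x n)]
  exact chiQ_eq_val_zpow (by push_cast [add_mul, hq, hq']; rfl) x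

lemma chiQ_nuS (q : ℚ) (t : ℝ) : chiQ q (nuS t) = Complex.exp ((q * t : ℝ) * I) := by
  rw [chiQ_apply, nuS_val, ← Complex.exp_int_mul]
  congr 1
  push_cast [Rat.cast_def, Rat.coe_pnatDen]
  ring

lemma chiQ_injective : Function.Injective chiQ := by
  intro q q' h
  by_contra hne
  have hsub : ((q : ℝ) - q') ≠ 0 := sub_ne_zero.2 (Rat.cast_injective.ne hne)
  have := congrArg (· / chiQ q' (nuS (π / (q - q')))) (congrFun h (nuS (π / (q - q'))))
  simp only [div_self (Complex.exp_ne_zero _), chiQ_nuS, ← Complex.exp_sub] at this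
  rw [← sub_mul, ← ofReal_sub, ← sub_mul, mul_div_cancel₀ _ hsub, Complex.exp_pi_mul_I] at this
  norm_num at this

lemma exists_chiQ_eq {χ : SolQ → ℂ} (hcont : Continuous χ)
    (hmul : ∀ x y : SolQ, χ (x * y) = χ x * χ y) (hnorm : ∀ x : SolQ, ‖χ x‖ = 1) :
    ∃ q : ℚ, χ = chiQ q := by
  obtain ⟨n, m, hχ⟩ := exists_eq_val_zpow hcont hmul hnorm
  refine ⟨m / n, funext fun x => ?_⟩
  rw [hχ, chiQ_eq_val_zpow (div_mul_cancel₀ _ (by positivity))]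

/-- Every continuous character `χ : S¹_ℚ → S¹` has the form
`χ = (π_n)^m`, and `q ↦ χ_q` is a group isomorphism from `(ℚ, +)` onto the
Pontryagin dual of `S¹_ℚ`. -/
theorem statement11 :
    (∀ χ : SolQ → ℂ, Continuous χ → (∀ x y : SolQ, χ (x * y) = χ x * χ y) →
      (∀ x : SolQ, ‖χ x‖ = 1) →
      ∃ (n : ℕ+) (m : ℤ), ∀ x : SolQ, χ x = (x.1 n) ^ m) ∧
    (∀ q : ℚ, Continuous (chiQ q) ∧ (∀ x : SolQ, ‖chiQ q x‖ = 1) ∧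
      ∀ x y : SolQ, chiQ q (x * y) = chiQ q x * chiQ q y) ∧
    (∀ q q' : ℚ, ∀ x : SolQ, chiQ (q + q') x = chiQ q x * chiQ q' x) ∧
    Function.Injective chiQ ∧
    (∀ χ : SolQ → ℂ, Continuous χ → (∀ x y : SolQ, χ (x * y) = χ x * χ y) →
      (∀ x : SolQ, ‖χ x‖ = 1) → ∃ q : ℚ, χ = chiQ q) :=
  ⟨fun _ => exists_eq_val_zpow, fun q => ⟨continuous_chiQ q, norm_chiQ q, chiQ_mul q⟩,
    chiQ_add, chiQ_injective, fun _ => exists_chiQ_eq⟩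

end
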